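/- arXiv:1311.0573 — 2 statements merged into one kernel-verified Lean document; each statement's English description precedes it below -/
import Mathlib

section
/- Let G be a 3-connected graph containing a separating set S with |S| = 3. Let X be a bridge of G|S that contains at least two vertices not in S. Suppose there are at least four edges joining vertices of S to vertices of X \ S, and suppose some vertex x ∈ S has at least two neighbours in X \ S. Then there exists a path P in the subgraph induced by X whose endpoints lie in S, whose internal vertices avoid S, and which does not meet x; and there exist two distinct vertices q1, q2 on P and two paths Q1 (from x to q1) and Q2 (from x to q2), contained in the induced subgraph on X, that meet each other only at x and contain no vertex of P other than q1 and q2 respectively. -/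
open SimpleGraph

universe u v

/-- Degree of a vertex as the `ncard` of its neighbour set. -/
noncomputable def degN {V : Type u} (H : SimpleGraph V) (x : V) : ℕ :=
  (H.neighborSet x).ncard

/-- `a` and `b` are joined by a walk in `G` with no internal vertex in `S`. -/
def JoinedOffSet {V : Type u} (G : SimpleGraph V) (S : Set V) (a b : V) : Prop :=
  ∃ p : G.Walk a b, ∀ x ∈ p.support, x = a ∨ x = b ∨ x ∉ S

/-- `U` is a bridge of `G|S`: a maximal set of vertices any two of which are joined
by a path in `G` with no internal vertex in `S`. -/
def IsBridgeOf {V : Type u} (G : SimpleGraph V) (S : Set V) (U : Set V) : Prop :=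
  U.Nonempty ∧ (∀ a ∈ U, ∀ b ∈ U, JoinedOffSet G S a b) ∧
    ∀ U' : Set V, U ⊆ U' → (∀ a ∈ U', ∀ b ∈ U', JoinedOffSet G S a b) → U' = U

/-- `S` is a separating set of `G`: removing it disconnects the graph. -/
def IsSeparating {V : Type u} (G : SimpleGraph V) (S : Set V) : Prop :=
  ¬ (G.induce Sᶜ).Connected

/-- `G` is 3-connected: connected, and no set of at most two vertices disconnects it. -/
def ThreeConnected {V : Type u} (G : SimpleGraph V) : Prop :=
  G.Connected ∧ ∀ S : Set V, S.ncard ≤ 2 → (G.induce Sᶜ).Connected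

/-- The wheel `W_k`: a cycle on vertices `0, …, k-1` together with a hub `k`
adjacent to every rim vertex. -/
def wheel (k : ℕ) : SimpleGraph (Fin (k + 1)) :=
  SimpleGraph.fromRel (fun a b =>
    a.val = k ∨ b.val = k ∨ (a.val < k ∧ b.val < k ∧ (a.val + 1) % k = b.val))

/-- `H` is a subdivision of `F` via the branch-vertex embedding `f`:
each edge of `F` is replaced by a path of `H`, paths are internally disjoint,
internal vertices are not branch vertices, and every (non-isolated) vertex and
every edge of `H` lies on one of these paths. -/
def IsSubdivisionWith {α : Type u} {V : Type v} (F : SimpleGraph α) (H : SimpleGraph V)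
    (f : α → V) : Prop :=
  Function.Injective f ∧
  ∃ P : ∀ a b : α, F.Adj a b → H.Walk (f a) (f b),
    (∀ a b (h : F.Adj a b), (P a b h).IsPath) ∧
    (∀ a b (h : F.Adj a b), ∀ c ∈ (P a b h).support, c ≠ f a → c ≠ f b → c ∉ Set.range f) ∧
    (∀ a b (h : F.Adj a b), ∀ a' b' (h' : F.Adj a' b'), s(a, b) ≠ s(a', b') →
      ∀ c, c ∈ (P a b h).support → c ∈ (P a' b' h').support →
        (c = f a ∨ c = f b) ∧ (c = f a' ∨ c = f b')) ∧
    (∀ x ∈ H.support, ∃ a, ∃ b, ∃ h : F.Adj a b, x ∈ (P a b h).support) ∧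
    (∀ e ∈ H.edgeSet, ∃ a, ∃ b, ∃ h : F.Adj a b, e ∈ (P a b h).edges)

/-- `H` is a subdivision of `F`. -/
def IsSubdivision {α : Type u} {V : Type v} (F : SimpleGraph α) (H : SimpleGraph V) : Prop :=
  ∃ f : α → V, IsSubdivisionWith F H f

/-- `H` is a subdivision of the wheel with `k` spokes. -/
def IsWheelSubdivision {V : Type v} (H : SimpleGraph V) (k : ℕ) : Prop :=
  IsSubdivision (wheel k) H

/-- `G` contains a `W_k`-subdivision as a subgraph. -/
def ContainsWheel {V : Type v} (G : SimpleGraph V) (k : ℕ) : Prop :=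
  ∃ H : SimpleGraph V, H ≤ G ∧ IsWheelSubdivision H k

/-- `G` contains a `W_k`-subdivision centred on `x` (i.e. `x` is its degree-`k` vertex). -/
def ContainsWheelCenteredOn {V : Type v} (G : SimpleGraph V) (k : ℕ) (x : V) : Prop :=
  ∃ H : SimpleGraph V, H ≤ G ∧ IsWheelSubdivision H k ∧ degN H x = k

/-- `a` and `b` are joined by a path lying in the bridge `A` of `G|S`,
internally disjoint from `S`. -/
def PathInBridge {V : Type u} (G : SimpleGraph V) (S A : Set V) (a b : V) : Prop :=
  IsBridgeOf G S A ∧ ∃ p : G.Walk a b, p.IsPath ∧ (∀ x ∈ p.support, x ∈ A) ∧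
    (∀ x ∈ p.support, x = a ∨ x = b ∨ x ∉ S)
/-!
Write `S = {x, s₁, s₂}`. As `S` separates, some vertex lies outside `X ∪ S`, and 3-connectivity
then gives `s₁` and `s₂` neighbours in `X \ S`; so they are joined by a path `P` through `X \ S`.
For every `c ≠ x` the graph `G - {x, c}` is connected, so no single vertex separates the
neighbours of `x` from `P` in `G - x`, and Menger's theorem yields two disjoint walks from them
to `P`. A walk in `G - x` that meets `S \ {x} ⊆ P` only at its end cannot leave the bridge `X`,
so these walks, prefixed by `x`, are the required `Q₁` and `Q₂`.
-/

namespace SimpleGraph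

variable {V : Type*} {G G' : SimpleGraph V}

namespace Walk

variable {a b : V}

lemma eq_of_mem_support_of_forall_darts {T : Set V} {w : G.Walk a b}
    (hw : ∀ d ∈ w.darts, d.fst ∉ T) {y : V} (hy : y ∈ w.support) (hyT : y ∈ T) : y = b := by
  rw [← w.map_fst_darts_append, List.mem_append, List.mem_map, List.mem_singleton] at hy
  obtain ⟨d, hd, rfl⟩ | rfl := hy
  · exact absurd hyT (hw d hd)
  · rfl

lemma exists_eq_append_of_exists_mem_support (w : G.Walk a b) {T : Set V}
    (h : ∃ m ∈ w.support, m ∈ T) :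
    ∃ q ∈ T, ∃ (w₁ : G.Walk a q) (w₂ : G.Walk q b), w = w₁.append w₂ ∧
      ∀ d ∈ w₁.darts, d.fst ∉ T := by
  induction w with
  | nil =>
    obtain ⟨m, hm, hmT⟩ := h
    rw [support_nil, List.mem_singleton] at hm
    exact ⟨_, hm ▸ hmT, nil, nil, rfl, by simp⟩
  | @cons u v c huv p ih =>
    by_cases hu : u ∈ T
    · exact ⟨u, hu, nil, cons huv p, rfl, by simp⟩
    · obtain ⟨q, hq, w₁, w₂, rfl, hw₁⟩ := ih (by simpa [hu] using h)
      exact ⟨q, hq, cons huv w₁, w₂, rfl, by simpa [hu] using hw₁⟩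

lemma support_subset_of_closed {Y Z : Set V}
    (hY : ∀ u v, G.Adj u v → u ∈ Y → u ∉ Z → v ∈ Y) (w : G.Walk a b) (ha : a ∈ Y)
    (hw : ∀ d ∈ w.darts, d.fst ∉ Z) : ∀ y ∈ w.support, y ∈ Y := by
  induction w with
  | nil => simpa using ha
  | cons huv p ih =>
    simp only [darts_cons, List.mem_cons, forall_eq_or_imp] at hw
    simpa [ha] using ih (hY _ _ huv ha hw.1) hw.2

end Walk

def IsSeparator (G : SimpleGraph V) (A B Z : Set V) : Prop :=
  ∀ a ∈ A, ∀ b ∈ B, ∀ w : G.Walk a b, ∃ z ∈ w.support, z ∈ Z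

/-- A walk from `A` to `B` meeting `B` only in its last vertex. -/
structure ABWalk (G : SimpleGraph V) (A B : Set V) where
  {src : V}
  {tgt : V}
  walk : G.Walk src tgt
  src_mem : src ∈ A
  tgt_mem : tgt ∈ B
  fst_notMem : ∀ d ∈ walk.darts, d.fst ∉ B

variable {A B T Z : Set V} {y z : V}

namespace IsSeparator

lemma symm (h : G.IsSeparator A B Z) : G.IsSeparator B A Z := fun b hb a ha w => by
  simpa using h a ha b hb w.reverse

lemma mono {Z' : Set V} (h : G.IsSeparator A B Z) (hZ : Z ⊆ Z') : G.IsSeparator A B Z' :=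
  fun a ha b hb w => (h a ha b hb w).imp fun _ hz => ⟨hz.1, hZ hz.2⟩

lemma insert_of_deleteEdges {u v : V} (h : (G.deleteEdges {s(u, v)}).IsSeparator A B Z) :
    G.IsSeparator A B (insert u Z) := fun a ha b hb w => by
  by_cases huv : s(u, v) ∈ w.edges
  · exact ⟨u, w.fst_mem_support_of_mem_edges huv, Set.mem_insert u Z⟩
  · obtain ⟨z, hz, hzZ⟩ := h a ha b hb (w.toDeleteEdge _ huv)
    exact ⟨z, by simpa using hz, Set.mem_insert_of_mem u hzZ⟩

/-- The part of an `A`–`B` walk before it first reaches `T` cannot use the edge `uv`. -/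
lemma of_deleteEdges {u v : V} (hu : u ∈ T) (hv : v ∈ T) (hT : G.IsSeparator A B T)
    (h : (G.deleteEdges {s(u, v)}).IsSeparator A T Z) : G.IsSeparator A B Z :=
  fun a ha b hb w => by
  obtain ⟨q, hq, w₁, w₂, rfl, hw₁⟩ := w.exists_eq_append_of_exists_mem_support (hT a ha b hb w)
  have huv : s(u, v) ∉ w₁.edges := by
    intro he
    obtain ⟨d, hd, hde⟩ := List.mem_map.mp he
    obtain ⟨h₁, -⟩ | ⟨h₁, -⟩ := dart_edge_eq_mk'_iff'.mp hde
    · exact hw₁ d hd (h₁ ▸ hu)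
    · exact hw₁ d hd (h₁ ▸ hv)
  obtain ⟨z, hz, hzZ⟩ := h a ha q hq (w₁.toDeleteEdge _ huv)
  exact ⟨z, by simp_all, hzZ⟩

end IsSeparator

lemma isSeparator_bot_inter : (⊥ : SimpleGraph V).IsSeparator A B (A ∩ B) := by
  rintro a ha b hb (_ | ⟨h, _⟩)
  · exact ⟨a, by simp, ha, hb⟩
  · exact absurd h (by simp)

namespace ABWalk

lemma eq_tgt (p : G.ABWalk A B) (hy : y ∈ p.walk.support) (hyB : y ∈ B) : y = p.tgt :=
  Walk.eq_of_mem_support_of_forall_darts p.fst_notMem hy hyB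

lemma tgt_ne_of_disjoint {p q : G.ABWalk A B} (h : p.walk.support.Disjoint q.walk.support) :
    p.tgt ≠ q.tgt := fun he =>
  h p.walk.end_mem_support (by rw [he]; exact q.walk.end_mem_support)

def mapLe (h : G ≤ G') (p : G.ABWalk A B) : G'.ABWalk A B where
  walk := p.walk.mapLe h
  src_mem := p.src_mem
  tgt_mem := p.tgt_mem
  fst_notMem := by simpa [Walk.mapLe, Walk.darts_map] using p.fst_notMem

@[simp] lemma support_mapLe (h : G ≤ G') (p : G.ABWalk A B) :
    (p.mapLe h).walk.support = p.walk.support :=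
  Walk.support_mapLe_eq_support h p.walk

lemma exists_support_subset {a b : V} (w : G.Walk a b) (ha : a ∈ A) (hb : b ∈ B) :
    ∃ p : G.ABWalk A B, p.walk.support ⊆ w.support := by
  obtain ⟨q, hq, w₁, w₂, rfl, hw₁⟩ :=
    w.exists_eq_append_of_exists_mem_support ⟨b, w.end_mem_support, hb⟩
  exact ⟨⟨w₁, ha, hq, hw₁⟩, fun y hy => Walk.mem_support_append_iff _ _ |>.mpr (Or.inl hy)⟩

lemma eq_tgt_of_mem_takeUntil [DecidableEq V] (p : G.ABWalk A T)
    (hz : z ∈ p.walk.support) (hy : y ∈ (p.walk.takeUntil z hz).support) (hyT : y ∈ T) :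
    z = p.tgt := by
  have hyp : y = p.tgt := p.eq_tgt (p.walk.support_takeUntil_subset_support hz hy) hyT
  subst hyp
  exact (Walk.eq_of_mem_support_of_forall_darts
    (fun d hd => p.fst_notMem d (p.walk.darts_takeUntil_subset_darts hz hd)) hy hyT).symm

lemma eq_tgt_of_mem_of_mem (hy : G.IsSeparator A B {y}) (hyT : y ∈ T) (p : G.ABWalk A T)
    (q : G.ABWalk B T) (hzp : z ∈ p.walk.support) (hzq : z ∈ q.walk.support) :
    z = p.tgt ∧ z = q.tgt := by
  classical
  obtain ⟨y', hy', rfl⟩ := hy _ p.src_mem _ q.src_mem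
    ((p.walk.takeUntil z hzp).append (q.walk.takeUntil z hzq).reverse)
  rw [Walk.mem_support_append_iff, Walk.support_reverse, List.mem_reverse] at hy'
  rcases hy' with hy' | hy'
  · have hz := p.eq_tgt_of_mem_takeUntil hzp hy' hyT
    exact ⟨hz, q.eq_tgt hzq (hz ▸ p.tgt_mem)⟩
  · have hz := q.eq_tgt_of_mem_takeUntil hzq hy' hyT
    exact ⟨p.eq_tgt hzp (hz ▸ q.tgt_mem), hz⟩

lemma tgt_eq_of_tgt_eq (hy : G.IsSeparator A B {y}) (hyT : y ∈ T) (p : G.ABWalk A T)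
    (q : G.ABWalk B T) (h : p.tgt = q.tgt) : p.tgt = y := by
  obtain ⟨y', hy', rfl⟩ := hy _ p.src_mem _ q.src_mem
    (p.walk.append (q.walk.copy rfl h.symm).reverse)
  rw [Walk.mem_support_append_iff, Walk.support_reverse, List.mem_reverse,
    Walk.support_copy] at hy'
  rcases hy' with hy' | hy'
  · exact (p.eq_tgt hy' hyT).symm
  · exact h.trans (q.eq_tgt hy' hyT).symm

end ABWalk

lemma exists_disjoint_of_two_le_ncard_inter (h : 2 ≤ (A ∩ B).ncard) :
    ∃ p q : G.ABWalk A B, p.walk.support.Disjoint q.walk.support := by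
  obtain ⟨a, b, ha, hb, hab⟩ := (Set.one_lt_ncard_iff (Set.finite_of_ncard_pos (by omega))).mp h
  refine ⟨⟨Walk.nil, ha.1, ha.2, by simp⟩, ⟨Walk.nil, hb.1, hb.2, by simp⟩, by simpa using hab.symm⟩

lemma exists_disjoint_of_join {u v : V} (hle : G' ≤ G) (huv : G.Adj u v)
    (hy : G'.IsSeparator A B {y}) (pY pE : G'.ABWalk A {y, u, v})
    (qY qE : G'.ABWalk B {y, u, v}) (hpY : pY.tgt = y) (hqY : qY.tgt = y) (hpE : pE.tgt ≠ y)
    (hqE : qE.tgt ≠ y) (hp : pY.walk.support.Disjoint pE.walk.support)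
    (hq : qY.walk.support.Disjoint qE.walk.support) :
    ∃ p q : G.ABWalk A B, p.walk.support.Disjoint q.walk.support := by
  have hyT : y ∈ ({y, u, v} : Set V) := Set.mem_insert y _
  have hne : pE.tgt ≠ qE.tgt := fun h => hpE (ABWalk.tgt_eq_of_tgt_eq hy hyT pE qE h)
  have hadj : G.Adj pE.tgt qE.tgt := by
    have h₁ := pE.tgt_mem
    have h₂ := qE.tgt_mem
    simp only [Set.mem_insert_iff, Set.mem_singleton_iff] at h₁ h₂
    rcases h₁ with h₁ | h₁ | h₁ <;> rcases h₂ with h₂ | h₂ | h₂ <;> simp_all [huv.symm]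
  obtain ⟨p, hp'⟩ := ABWalk.exists_support_subset
    ((pY.walk.append (qY.walk.copy rfl (hqY.trans hpY.symm)).reverse).mapLe hle)
    pY.src_mem qY.src_mem
  obtain ⟨q, hq'⟩ := ABWalk.exists_support_subset
    ((pE.walk.mapLe hle).append (.cons hadj (qE.walk.reverse.mapLe hle))) pE.src_mem qE.src_mem
  refine ⟨p, q, fun z hz₁ hz₂ => ?_⟩
  have h₁ := hp' hz₁
  have h₂ := hq' hz₂
  simp only [Walk.mem_support_append_iff, Walk.support_mapLe_eq_support, Walk.support_reverse,
    Walk.support_copy, List.mem_reverse, Walk.support_cons, List.mem_cons] at h₁ h₂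
  replace h₂ : z ∈ pE.walk.support ∨ z ∈ qE.walk.support := by
    rcases h₂ with h₂ | rfl | h₂
    exacts [Or.inl h₂, Or.inl pE.walk.end_mem_support, Or.inr h₂]
  rcases h₁ with h₁ | h₁ <;> rcases h₂ with h₂ | h₂
  · exact hp h₁ h₂
  · have := ABWalk.eq_tgt_of_mem_of_mem hy hyT pY qE h₁ h₂
    exact hqE (this.2.symm.trans (this.1.trans hpY))
  · have := ABWalk.eq_tgt_of_mem_of_mem hy hyT pE qY h₂ h₁
    exact hpE (this.1.symm.trans (this.2.trans hqY))
  · exact hq h₁ h₂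

lemma exists_disjoint_of_split {u v : V} (hle : G' ≤ G) (huv : G.Adj u v)
    (hy : G'.IsSeparator A B {y}) (p₁ p₂ : G'.ABWalk A {y, u, v})
    (q₁ q₂ : G'.ABWalk B {y, u, v}) (hp : p₁.walk.support.Disjoint p₂.walk.support)
    (hq : q₁.walk.support.Disjoint q₂.walk.support) :
    ∃ p q : G.ABWalk A B, p.walk.support.Disjoint q.walk.support := by
  have hyT : y ∈ ({y, u, v} : Set V) := Set.mem_insert y _
  have hp₁₂ := ABWalk.tgt_ne_of_disjoint hp
  have hq₁₂ := ABWalk.tgt_ne_of_disjoint hq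
  have hcommon : p₁.tgt = q₁.tgt ∨ p₁.tgt = q₂.tgt ∨ p₂.tgt = q₁.tgt ∨ p₂.tgt = q₂.tgt := by
    have := p₁.tgt_mem
    have := p₂.tgt_mem
    have := q₁.tgt_mem
    have := q₂.tgt_mem
    simp only [Set.mem_insert_iff, Set.mem_singleton_iff] at *
    grind
  have key := ABWalk.tgt_eq_of_tgt_eq hy hyT
  rcases hcommon with h | h | h | h
  · exact exists_disjoint_of_join hle huv hy p₁ p₂ q₁ q₂ (key _ _ h) (h.symm.trans (key _ _ h))
      (by grind) (by grind) hp hq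
  · exact exists_disjoint_of_join hle huv hy p₁ p₂ q₂ q₁ (key _ _ h) (h.symm.trans (key _ _ h))
      (by grind) (by grind) hp hq.symm
  · exact exists_disjoint_of_join hle huv hy p₂ p₁ q₁ q₂ (key _ _ h) (h.symm.trans (key _ _ h))
      (by grind) (by grind) hp.symm hq
  · exact exists_disjoint_of_join hle huv hy p₂ p₁ q₂ q₁ (key _ _ h) (h.symm.trans (key _ _ h))
      (by grind) (by grind) hp.symm hq.symm

/-- Menger's theorem for two paths, by induction on `G`: delete an edge `uv`; if a single vertex
`y` then separates `A` from `B`, route two paths through the separator `{y, u, v}`. -/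
theorem exists_disjoint_ABWalks [Finite V] (h : ∀ Z, G.IsSeparator A B Z → 2 ≤ Z.ncard) :
    ∃ p q : G.ABWalk A B, p.walk.support.Disjoint q.walk.support := by
  induction G using WellFoundedLT.induction generalizing A B with
  | _ G ih =>
  rcases eq_or_ne G ⊥ with rfl | hG
  · exact exists_disjoint_of_two_le_ncard_inter (h _ isSeparator_bot_inter)
  obtain ⟨u, v, huv⟩ := ne_bot_iff_exists_adj.mp hG
  have hlt : G.deleteEdges {s(u, v)} < G := (deleteEdges_le _).lt_of_ne fun h =>
    Set.disjoint_singleton_right.mp (deleteEdges_eq_self.mp h) huv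
  have hle := hlt.le
  by_cases h' : ∀ Z, (G.deleteEdges {s(u, v)}).IsSeparator A B Z → 2 ≤ Z.ncard
  · obtain ⟨p, q, hpq⟩ := ih _ hlt h'
    exact ⟨p.mapLe hle, q.mapLe hle, by simpa using hpq⟩
  push Not at h'
  obtain ⟨Z, hZ, hZ2⟩ := h'
  obtain ⟨y, rfl⟩ : ∃ y, Z = {y} := by
    have := h _ hZ.insert_of_deleteEdges
    have := Set.ncard_insert_le u Z
    exact Set.ncard_eq_one.mp (by omega)
  have hT : G.IsSeparator A B {y, u, v} :=
    hZ.insert_of_deleteEdges.mono (by grind)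
  obtain ⟨p₁, p₂, hp⟩ := ih _ hlt fun Z' hZ' => h Z' (.of_deleteEdges (by simp) (by simp) hT hZ')
  obtain ⟨q₁, q₂, hq⟩ := ih _ hlt fun Z' hZ' =>
    h Z' (IsSeparator.of_deleteEdges (by simp) (by simp) hT.symm hZ').symm
  exact exists_disjoint_of_split hle huv hZ p₁ p₂ q₁ q₂ hp hq

lemma IsSeparator.two_le_ncard [Finite V] [Nonempty V]
    (h : ∀ c, ∃ a ∈ A, ∃ b ∈ B, ∃ w : G.Walk a b, c ∉ w.support)
    (hZ : G.IsSeparator A B Z) : 2 ≤ Z.ncard := by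
  by_contra! hZ2
  obtain ⟨c, hc⟩ : ∃ c, Z ⊆ {c} := by
    have hsub : Z.Subsingleton := Set.ncard_le_one_iff_subsingleton.mp (by omega)
    obtain rfl | ⟨c, rfl⟩ := hsub.eq_empty_or_singleton
    exacts [⟨Classical.arbitrary V, Set.empty_subset _⟩, ⟨c, subset_rfl⟩]
  obtain ⟨a, ha, b, hb, w, hw⟩ := h c
  obtain ⟨z, hz, hzZ⟩ := hZ a ha b hb w
  exact hw (hc hzZ ▸ hz)

lemma Reachable.exists_walk_of_induce {H : SimpleGraph V} {W : Set V}
    (hGH : ∀ u ∈ W, ∀ v ∈ W, G.Adj u v → H.Adj u v) {a b : W} (h : (G.induce W).Reachable a b) :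
    ∃ w : H.Walk a b, ∀ y ∈ w.support, y ∈ W := by
  obtain ⟨w⟩ := h
  let f : G.induce W →g H := ⟨Subtype.val, fun {u v} huv => hGH _ u.2 _ v.2 huv⟩
  refine ⟨w.map f, fun y hy => ?_⟩
  obtain ⟨y, -, rfl⟩ := List.mem_map.mp (w.support_map f ▸ hy)
  exact y.2

end SimpleGraph

lemma Set.exists_eq_insert_pair_of_ncard_eq_three {α : Type*} {S : Set α} {x : α}
    (hS : S.ncard = 3) (hx : x ∈ S) :
    ∃ s₁ s₂, s₁ ≠ x ∧ s₂ ≠ x ∧ s₁ ≠ s₂ ∧ S = {x, s₁, s₂} := by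
  obtain ⟨s₁, s₂, h₁₂, hS'⟩ :=
    Set.ncard_eq_two.mp (by rw [Set.ncard_sdiff_singleton_of_mem hx, hS])
  have h₁ : s₁ ∈ S \ {x} := hS' ▸ by simp
  have h₂ : s₂ ∈ S \ {x} := hS' ▸ by simp
  refine ⟨s₁, s₂, h₁.2, h₂.2, h₁₂, ?_⟩
  rw [← hS', Set.insert_sdiff_singleton, Set.insert_eq_of_mem hx]

section Bridge

variable {V : Type*} {G : SimpleGraph V} {S X : Set V}

lemma JoinedOffSet.symm {a b : V} (h : JoinedOffSet G S a b) : JoinedOffSet G S b a := by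
  obtain ⟨p, hp⟩ := h
  refine ⟨p.reverse, fun z hz => ?_⟩
  rw [Walk.support_reverse, List.mem_reverse] at hz
  have := hp z hz
  tauto

lemma IsBridgeOf.mem_of_adj (hX : IsBridgeOf G S X) {u v : V} (huv : G.Adj u v) (hv : v ∈ X)
    (hvS : v ∉ S) : u ∈ X := by
  obtain ⟨-, hjoin, hmax⟩ := hX
  have hu : ∀ c ∈ X, JoinedOffSet G S u c := fun c hc => by
    obtain ⟨p, hp⟩ := hjoin v hv c hc
    refine ⟨.cons huv p, fun z hz => ?_⟩
    rw [Walk.support_cons, List.mem_cons] at hz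
    rcases hz with rfl | hz
    · exact Or.inl rfl
    · rcases hp z hz with rfl | h | h <;> tauto
  rw [← hmax (insert u X) (Set.subset_insert u X) ?_]
  · exact Set.mem_insert u X
  rintro a (rfl | ha) b (rfl | hb)
  · exact ⟨.nil, by simp⟩
  · exact hu b hb
  · exact (hu a ha).symm
  · exact hjoin a ha b hb

lemma IsBridgeOf.exists_walk_diff (hX : IsBridgeOf G S X) {a b : V} (ha : a ∈ X \ S)
    (hb : b ∈ X \ S) : ∃ w : G.Walk a b, ∀ y ∈ w.support, y ∈ X \ S := by
  obtain ⟨w, hw⟩ := hX.2.1 a ha.1 b hb.1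
  have hS : ∀ y ∈ w.support, y ∉ S := fun y hy => by
    rcases hw y hy with rfl | rfl | h
    exacts [ha.2, hb.2, h]
  have hwX := w.support_subset_of_closed (fun u v huv hu huS => hX.mem_of_adj huv.symm hu huS)
    ha.1 fun d hd => hS _ (w.dart_fst_mem_support_of_mem_darts hd)
  exact ⟨w, fun y hy => ⟨hwX y hy, hS y hy⟩⟩

lemma IsBridgeOf.exists_notMem (hX : IsBridgeOf G S X) (hsep : IsSeparating G S) {a : V}
    (ha : a ∈ X \ S) : ∃ z, z ∉ X ∧ z ∉ S := by
  by_contra! h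
  refine hsep (connected_iff _ |>.mpr ⟨fun ⟨b, hb⟩ ⟨c, hc⟩ => ?_, ⟨⟨a, ha.2⟩⟩⟩)
  have hXS : ∀ {z}, z ∉ S → z ∈ X \ S := fun hz => ⟨by_contra fun hzX => hz (h _ hzX), hz⟩
  obtain ⟨w, hw⟩ := hX.exists_walk_diff (hXS hb) (hXS hc)
  exact (w.induce Sᶜ fun y hy => (hw y hy).2).reachable

/-- A walk in `G - (S \ {s})` from `X \ S` to a vertex outside `X ∪ S` leaves `X \ S`,
and it can only do so through `s`. -/
lemma IsBridgeOf.exists_adj_of_connected (hX : IsBridgeOf G S X) {s a z : V}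
    (hconn : (G.induce (S \ {s})ᶜ).Connected) (ha : a ∈ X \ S) (hzX : z ∉ X) (hzS : z ∉ S) :
    ∃ v ∈ X \ S, G.Adj s v := by
  have hmem : ∀ {y}, y ∉ S → y ∈ (S \ {s})ᶜ := fun hy h => hy h.1
  obtain ⟨w, hw⟩ := (hconn.preconnected ⟨a, hmem ha.2⟩ ⟨z, hmem hzS⟩).exists_walk_of_induce
    (H := G) fun _ _ _ _ h => h
  obtain ⟨d, hd, hd₁, hd₂⟩ := w.exists_boundary_dart (X \ S) ha fun h => hzX h.1
  have hdS : d.snd ∈ S := by_contra fun h => hd₂ ⟨hX.mem_of_adj d.adj.symm hd₁.1 hd₁.2, h⟩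
  have hds : d.snd = s := by
    by_contra h
    exact hw _ (w.dart_snd_mem_support_of_mem_darts hd) ⟨hdS, h⟩
  exact ⟨d.fst, hd₁, hds ▸ d.adj.symm⟩

lemma IsBridgeOf.exists_path (hX : IsBridgeOf G S X) {s₁ s₂ u₁ u₂ : V} (hu₁ : u₁ ∈ X \ S)
    (hu₂ : u₂ ∈ X \ S) (h₁ : G.Adj s₁ u₁) (h₂ : G.Adj u₂ s₂) :
    ∃ P : G.Walk s₁ s₂, P.IsPath ∧ ∀ y ∈ P.support, y = s₁ ∨ y = s₂ ∨ y ∈ X \ S := by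
  classical
  obtain ⟨w, hw⟩ := hX.exists_walk_diff hu₁ hu₂
  refine ⟨(Walk.cons h₁ (w.concat h₂)).bypass, Walk.bypass_isPath _, fun y hy => ?_⟩
  have := Walk.support_bypass_subset_support _ hy
  simp only [Walk.support_cons, Walk.support_concat, List.mem_cons, List.mem_append,
    List.not_mem_nil, or_false] at this
  rcases this with rfl | hy | rfl
  exacts [Or.inl rfl, Or.inr (Or.inr (hw y hy)), Or.inr (Or.inl rfl)]

lemma IsBridgeOf.exists_spoke (hX : IsBridgeOf G S X) {x : V} {B : Set V} (hSB : S ⊆ insert x B)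
    (p : (G.deleteIncidenceSet x).ABWalk (G.neighborSet x ∩ X) B) :
    ∃ Q : G.Walk x p.tgt, Q.IsPath ∧ ∀ y ∈ Q.support, y = x ∨ y ∈ p.walk.support ∧ y ∈ X \ {x} := by
  classical
  have hpX : ∀ y ∈ p.walk.support, y ∈ X \ {x} := by
    refine p.walk.support_subset_of_closed (fun u v huv hu huB => ?_)
      ⟨p.src_mem.2, G.ne_of_adj p.src_mem.1 |>.symm⟩ p.fst_notMem
    obtain ⟨huv, hux, hvx⟩ := deleteIncidenceSet_adj.mp huv
    have huS : u ∉ S := fun h => (hSB h).elim hux (huB ·)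
    exact ⟨hX.mem_of_adj huv.symm hu.1 huS, hvx⟩
  have hQ : ∀ y ∈ p.walk.bypass.support, y ∈ p.walk.support ∧ y ∈ X \ {x} := fun y hy =>
    have := p.walk.support_bypass_subset_support hy
    ⟨this, hpX y this⟩
  have hxp : G.Adj x p.src := p.src_mem.1
  refine ⟨.cons hxp (p.walk.bypass.mapLe (deleteIncidenceSet_le G x)), ?_, ?_⟩
  · rw [Walk.cons_isPath_iff, Walk.support_mapLe_eq_support]
    exact ⟨(Walk.bypass_isPath _).mapLe _, fun h => (hQ x h).2.2 rfl⟩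
  · simp only [Walk.support_cons, List.mem_cons, Walk.support_mapLe_eq_support]
    rintro y (rfl | hy)
    exacts [Or.inl rfl, Or.inr (hQ y hy)]

lemma IsBridgeOf.exists_fan [Finite V] (hX : IsBridgeOf G S X) {x : V} {B : Set V}
    (hxX : x ∈ X) (hxB : x ∉ B) (hSB : S ⊆ insert x B)
    (hsep : ∀ c, ∃ a ∈ G.neighborSet x ∩ X, ∃ b ∈ B,
      ∃ w : (G.deleteIncidenceSet x).Walk a b, c ∉ w.support) :
    ∃ (q1 q2 : V) (Q1 : G.Walk x q1) (Q2 : G.Walk x q2),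
      q1 ∈ B ∧ q2 ∈ B ∧ q1 ≠ q2 ∧ Q1.IsPath ∧ Q2.IsPath ∧
      (∀ y ∈ Q1.support, y ∈ X) ∧ (∀ y ∈ Q2.support, y ∈ X) ∧
      (∀ y, y ∈ Q1.support → y ∈ Q2.support → y = x) ∧
      (∀ y ∈ Q1.support, y ∈ B → y = q1) ∧ (∀ y ∈ Q2.support, y ∈ B → y = q2) := by
  have : Nonempty V := ⟨x⟩
  obtain ⟨p₁, p₂, hp⟩ := exists_disjoint_ABWalks fun _ hZ => hZ.two_le_ncard hsep
  obtain ⟨Q₁, hQ₁, hQ₁p⟩ := hX.exists_spoke hSB p₁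
  obtain ⟨Q₂, hQ₂, hQ₂p⟩ := hX.exists_spoke hSB p₂
  refine ⟨_, _, Q₁, Q₂, p₁.tgt_mem, p₂.tgt_mem, ABWalk.tgt_ne_of_disjoint hp, hQ₁, hQ₂,
    fun y hy => ?_, fun y hy => ?_, fun y hy₁ hy₂ => ?_, fun y hy hyB => ?_, fun y hy hyB => ?_⟩
  · rcases hQ₁p y hy with rfl | h
    exacts [hxX, h.2.1]
  · rcases hQ₂p y hy with rfl | h
    exacts [hxX, h.2.1]
  · rcases hQ₁p y hy₁ with rfl | h₁
    · rfl
    rcases hQ₂p y hy₂ with rfl | h₂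
    · rfl
    exact absurd h₂.1 (hp h₁.1)
  · rcases hQ₁p y hy with rfl | h
    exacts [absurd hyB hxB, p₁.eq_tgt h.1 hyB]
  · rcases hQ₂p y hy with rfl | h
    exacts [absurd hyB hxB, p₂.eq_tgt h.1 hyB]

lemma ThreeConnected.exists_walk_deleteIncidenceSet (h3 : ThreeConnected G) {x c : V}
    {A B : Set V} (hA : 1 < A.ncard) (hB : 1 < B.ncard) (hxA : x ∉ A) (hxB : x ∉ B) :
    ∃ a ∈ A, ∃ b ∈ B, ∃ w : (G.deleteIncidenceSet x).Walk a b, c ∉ w.support := by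
  obtain ⟨a, ha, hac⟩ := Set.exists_ne_of_one_lt_ncard hA c
  obtain ⟨b, hb, hbc⟩ := Set.exists_ne_of_one_lt_ncard hB c
  have hW : ({x, c} : Set V).ncard ≤ 2 := (Set.ncard_insert_le _ _).trans (by simp)
  have hmem : ∀ {y}, y ≠ x → y ≠ c → y ∈ ({x, c} : Set V)ᶜ := by simp_all
  obtain ⟨w, hw⟩ := ((h3.2 _ hW).preconnected ⟨a, hmem (ne_of_mem_of_not_mem ha hxA) hac⟩
    ⟨b, hmem (ne_of_mem_of_not_mem hb hxB) hbc⟩).exists_walk_of_induce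
    (H := G.deleteIncidenceSet x) fun u hu v hv huv =>
      deleteIncidenceSet_adj.mpr ⟨huv, by rintro rfl; simp at hu, by rintro rfl; simp at hv⟩
  exact ⟨a, ha, b, hb, w, fun hc => hw c hc (by simp)⟩

end Bridge

theorem stmt0_general {V : Type u} [Fintype V] (G : SimpleGraph V) (S X : Set V) (x : V)
    (h3 : ThreeConnected G) (hsep : IsSeparating G S) (hS : S.ncard = 3)
    (hX : IsBridgeOf G S X)
    (hx : x ∈ S) (hnbr : 2 ≤ ((G.neighborSet x) ∩ (X \ S)).ncard) :
    ∃ (a b : V) (P : G.Walk a b), a ∈ S ∧ b ∈ S ∧ P.IsPath ∧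
      (∀ y ∈ P.support, y ∈ X) ∧ (∀ y ∈ P.support, y = a ∨ y = b ∨ y ∉ S) ∧
      x ∉ P.support ∧
      ∃ (q1 q2 : V) (Q1 : G.Walk x q1) (Q2 : G.Walk x q2),
        q1 ∈ P.support ∧ q2 ∈ P.support ∧ q1 ≠ q2 ∧
        Q1.IsPath ∧ Q2.IsPath ∧
        (∀ y ∈ Q1.support, y ∈ X) ∧ (∀ y ∈ Q2.support, y ∈ X) ∧
        (∀ y, y ∈ Q1.support → y ∈ Q2.support → y = x) ∧
        (∀ y ∈ Q1.support, y ∈ P.support → y = q1) ∧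
        (∀ y ∈ Q2.support, y ∈ P.support → y = q2) := by
  obtain ⟨s₁, s₂, hs₁, hs₂, hs₁₂, rfl⟩ := Set.exists_eq_insert_pair_of_ncard_eq_three hS hx
  obtain ⟨a, ha⟩ := Set.nonempty_of_ncard_ne_zero
    (s := G.neighborSet x ∩ (X \ {x, s₁, s₂})) (by omega)
  have hxX : x ∈ X := hX.mem_of_adj ha.1 ha.2.1 ha.2.2
  obtain ⟨z, hzX, hzS⟩ := hX.exists_notMem hsep ha.2
  have hconn : ∀ s ∈ ({x, s₁, s₂} : Set V), (G.induce ({x, s₁, s₂} \ {s})ᶜ).Connected :=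
    fun s hs => h3.2 _ (by rw [Set.ncard_sdiff_singleton_of_mem hs, hS])
  obtain ⟨u₁, hu₁, h₁⟩ := hX.exists_adj_of_connected (hconn s₁ (by simp)) ha.2 hzX hzS
  obtain ⟨u₂, hu₂, h₂⟩ := hX.exists_adj_of_connected (hconn s₂ (by simp)) ha.2 hzX hzS
  obtain ⟨P, hP, hPS⟩ := hX.exists_path hu₁ hu₂ h₁ h₂.symm
  have hPX : ∀ y ∈ P.support, y ∈ X := fun y hy => by
    rcases hPS y hy with rfl | rfl | h
    exacts [hX.mem_of_adj h₁ hu₁.1 hu₁.2, hX.mem_of_adj h₂ hu₂.1 hu₂.2, h.1]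
  have hxP : x ∉ P.support := fun h => by
    rcases hPS x h with h | h | h
    exacts [hs₁ h.symm, hs₂ h.symm, h.2 (by simp)]
  refine ⟨s₁, s₂, P, by simp, by simp, hP, hPX, fun y hy => (hPS y hy).imp_right (.imp_right (·.2)),
    hxP, hX.exists_fan hxX hxP ?_ fun c => ?_⟩
  · rintro y (rfl | rfl | rfl)
    exacts [Set.mem_insert _ _, .inr P.start_mem_support, .inr P.end_mem_support]
  · obtain ⟨a, ha, b, hb, w, hw⟩ := h3.exists_walk_deleteIncidenceSet (x := x) (c := c)
      (A := G.neighborSet x ∩ (X \ {x, s₁, s₂})) (B := {s₁, s₂}) (by omega)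
      (by rw [Set.ncard_pair hs₁₂]; omega) (fun h => h.2.2 (by simp)) (by simp [hs₁.symm, hs₂.symm])
    refine ⟨a, ⟨ha.1, ha.2.1⟩, b, ?_, w, hw⟩
    rcases hb with rfl | rfl
    exacts [P.start_mem_support, P.end_mem_support]

/-- Lemma 1 of the paper. -/
theorem stmt0 {V : Type u} [Fintype V] (G : SimpleGraph V) (S X : Set V) (x : V)
    (h3 : ThreeConnected G) (hsep : IsSeparating G S) (hS : S.ncard = 3)
    (hX : IsBridgeOf G S X) (hX2 : 2 ≤ (X \ S).ncard)
    (hedges : 4 ≤ {e : Sym2 V | e ∈ G.edgeSet ∧ ∃ a ∈ S, ∃ b ∈ X \ S, e = s(a, b)}.ncard)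
    (hx : x ∈ S) (hnbr : 2 ≤ ((G.neighborSet x) ∩ (X \ S)).ncard) :
    ∃ (a b : V) (P : G.Walk a b), a ∈ S ∧ b ∈ S ∧ P.IsPath ∧
      (∀ y ∈ P.support, y ∈ X) ∧ (∀ y ∈ P.support, y = a ∨ y = b ∨ y ∉ S) ∧
      x ∉ P.support ∧
      ∃ (q1 q2 : V) (Q1 : G.Walk x q1) (Q2 : G.Walk x q2),
        q1 ∈ P.support ∧ q2 ∈ P.support ∧ q1 ≠ q2 ∧
        Q1.IsPath ∧ Q2.IsPath ∧
        (∀ y ∈ Q1.support, y ∈ X) ∧ (∀ y ∈ Q2.support, y ∈ X) ∧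
        (∀ y, y ∈ Q1.support → y ∈ Q2.support → y = x) ∧
        (∀ y ∈ Q1.support, y ∈ P.support → y = q1) ∧
        (∀ y ∈ Q2.support, y ∈ P.support → y = q2) :=
  stmt0_general G S X x h3 hsep hS hX hx hnbr
end

section
/- Let k ≥ 7, let G be a graph, let S be a separating set of G with |S| = 4, and let v0 ∈ S. Suppose that every bridge of G|S contains at most one neighbour of v0 not in S. Then G contains no subdivision of the wheel W_k centred on v0. -/
open SimpleGraph

universe u v

/-!
The hub of a `W_k`-subdivision is its only vertex of degree more than six, so `v0` is the hub.
Let `X = S \ {v0}`, a set of three vertices. A spoke is blocked if it meets `X`, and a rim path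
is cut if it meets `X` at a vertex lying on no spoke; a vertex of `X` blocks at most one spoke or
cuts at most one rim path, so blocked spokes and cut rim paths number at most three together.
Consecutive rim branch vertices outside `S` are joined off `S` along an uncut rim path, so the
cut rim paths and the rim branch vertices in `S` split the rim into at most three arcs, while at
least `k - 3 ≥ 4` spokes are unblocked. Two unblocked spokes therefore end in the same arc: their
first vertices are distinct neighbours of `v0` joined off `S`, hence lie in a common bridge.
-/

open Finset

lemma Set.Subsingleton.ncard_le_one {α : Type*} {s : Set α} (h : s.Subsingleton) :
    s.ncard ≤ 1 :=
  (Set.ncard_le_one h.finite).2 fun _ ha _ hb => h ha hb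

namespace SimpleGraph

namespace Walk.IsPath

variable {V : Type*} {G : SimpleGraph V} {u v : V} {p : G.Walk u v}

lemma subsingleton_neighborSet_toSubgraph_start (hp : p.IsPath) :
    (p.toSubgraph.neighborSet u).Subsingleton := fun _ hy _ hy' =>
  (hp.snd_of_toSubgraph_adj hy).symm.trans (hp.snd_of_toSubgraph_adj hy')

lemma subsingleton_neighborSet_toSubgraph_end (hp : p.IsPath) :
    (p.toSubgraph.neighborSet v).Subsingleton := by
  simpa using hp.reverse.subsingleton_neighborSet_toSubgraph_start

lemma ncard_neighborSet_toSubgraph_le_two (hp : p.IsPath) (x : V) :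
    (p.toSubgraph.neighborSet x).ncard ≤ 2 := by
  classical
  by_cases hx : x ∈ p.support
  · have hsplit := congrArg (fun q : G.Walk u v => q.toSubgraph.neighborSet x) (p.take_spec hx)
    simp only [toSubgraph_append, Subgraph.neighborSet_sup] at hsplit
    rw [← hsplit]
    calc _ ≤ _ := Set.ncard_union_le _ _
      _ ≤ 1 + 1 := add_le_add
          (hp.takeUntil hx).subsingleton_neighborSet_toSubgraph_end.ncard_le_one
          (hp.dropUntil hx).subsingleton_neighborSet_toSubgraph_start.ncard_le_one
  · have : p.toSubgraph.neighborSet x = ∅ :=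
      Set.eq_empty_of_forall_notMem fun _ hy => hx (mem_support_of_adj_toSubgraph hy)
    simp [this]

end Walk.IsPath

variable {V : Type*} {G H : SimpleGraph V} {S : Set V} {a b c : V}

def ReachableAvoiding (G : SimpleGraph V) (S : Set V) (a b : V) : Prop :=
  ∃ p : G.Walk a b, ∀ z ∈ p.support, z ∉ S

namespace ReachableAvoiding

lemma refl (ha : a ∉ S) : ReachableAvoiding G S a a :=
  ⟨.nil, by simpa using ha⟩

lemma symm : ReachableAvoiding G S a b → ReachableAvoiding G S b a
  | ⟨p, hp⟩ => ⟨p.reverse, fun z hz => hp z (by simpa using hz)⟩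

lemma trans : ReachableAvoiding G S a b → ReachableAvoiding G S b c →
    ReachableAvoiding G S a c
  | ⟨p, hp⟩, ⟨q, hq⟩ => ⟨p.append q, fun z hz =>
      (Walk.mem_support_append_iff p q).1 hz |>.elim (hp z) (hq z)⟩

lemma mono (hHG : H ≤ G) : ReachableAvoiding H S a b → ReachableAvoiding G S a b
  | ⟨p, hp⟩ => ⟨p.mapLe hHG, fun z hz => hp z (by simpa using hz)⟩

lemma notMem_left : ReachableAvoiding G S a b → a ∉ S
  | ⟨p, hp⟩ => hp a p.start_mem_support

lemma joinedOffSet : ReachableAvoiding G S a b → JoinedOffSet G S a b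
  | ⟨p, hp⟩ => ⟨p, fun z hz => .inr (.inr (hp z hz))⟩

end ReachableAvoiding

lemma Walk.IsPath.exists_adj_reachableAvoiding {p : G.Walk a b} (hp : p.IsPath) (hab : a ≠ b)
    (hS : ∀ z ∈ p.support, z ∈ S → z = a) :
    ∃ y ∈ p.support, G.Adj a y ∧ ReachableAvoiding G S y b := by
  cases p with
  | nil => exact absurd rfl hab
  | @cons _ y _ hadj q =>
    rw [Walk.cons_isPath_iff] at hp
    exact ⟨y, by simp, hadj, q, fun z hz hzS => hp.2 (hS z (by simp [hz]) hzS ▸ hz)⟩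

lemma exists_isBridgeOf_superset [Finite V] {C : Set V} (hC : C.Nonempty)
    (hjoin : ∀ a ∈ C, ∀ b ∈ C, JoinedOffSet G S a b) : ∃ U, IsBridgeOf G S U ∧ C ⊆ U := by
  obtain ⟨U, hU⟩ := Set.toFinite {U : Set V | C ⊆ U ∧ ∀ a ∈ U, ∀ b ∈ U, JoinedOffSet G S a b}
    |>.exists_maximal ⟨C, subset_rfl, hjoin⟩
  exact ⟨U, ⟨hC.mono hU.prop.1, hU.prop.2, fun U' hUU' hU' =>
    (hU.eq_of_le ⟨hU.prop.1.trans hUU', hU'⟩ hUU').symm⟩, hU.prop.1⟩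

lemma not_reachableAvoiding_of_forall_isBridgeOf [Finite V] {v x y : V}
    (hbridge : ∀ U, IsBridgeOf G S U → (G.neighborSet v ∩ (U \ S)).ncard ≤ 1)
    (hx : G.Adj v x) (hy : G.Adj v y) (hxy : x ≠ y) : ¬ ReachableAvoiding G S x y := by
  intro hr
  have hxS := hr.notMem_left
  have hyS := hr.symm.notMem_left
  have hpair : ∀ a ∈ ({x, y} : Set V), ReachableAvoiding G S x a := by
    rintro a (rfl | rfl)
    exacts [.refl hxS, hr]
  obtain ⟨U, hU, hxyU⟩ := exists_isBridgeOf_superset (Set.insert_nonempty x {y})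
    fun a ha b hb => ((hpair a ha).symm.trans (hpair b hb)).joinedOffSet
  have hsub : ({x, y} : Set V) ⊆ G.neighborSet v ∩ (U \ S) := by
    rintro a (rfl | rfl)
    exacts [⟨hx, hxyU (.inl rfl), hxS⟩, ⟨hy, hxyU (.inr rfl), hyS⟩]
  have := (Set.ncard_pair hxy).symm.trans_le (Set.ncard_le_ncard hsub)
  have := hbridge U hU
  omega

end SimpleGraph

section Cycle

open Fin.NatCast

variable {k : ℕ} [NeZero k] {r : Fin k → Fin k → Prop} {T D : Finset (Fin k)}

lemma Fin.rel_add_natCast (htrans : ∀ i j l, r i j → r j l → r i l)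
    (hstep : ∀ j ∉ D, j ∉ T → j + 1 ∉ T → r j (j + 1)) {u : Fin k} (hu : u ∉ T) (huu : r u u) :
    ∀ s : ℕ, (∀ t < s, u + t ∉ D ∧ u + t + 1 ∉ T) → r u (u + s) ∧ u + s ∉ T
  | 0, _ => by simpa using ⟨huu, hu⟩
  | s + 1, h => by
    obtain ⟨hr, hs⟩ := Fin.rel_add_natCast htrans hstep hu huu s fun t ht => h t (by omega)
    obtain ⟨hD, hT⟩ := h s (by omega)
    rw [Nat.cast_succ, ← add_assoc]
    exact ⟨htrans _ _ _ hr (hstep _ hD hs hT), hT⟩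

/-- The positions `j` with `j ∈ D` or `j + 1 ∈ T` cut the cycle `Fin k` into arcs along which
`r` propagates. There are fewer arcs than elements outside `B`, so two of these share an arc. -/
lemma Fin.exists_ne_rel_of_card_lt (hsymm : ∀ i j, r i j → r j i)
    (htrans : ∀ i j l, r i j → r j l → r i l) {B : Finset (Fin k)} (hTB : T ⊆ B)
    (hrefl : ∀ i ∉ B, r i i) (hstep : ∀ j ∉ D, j ∉ T → j + 1 ∉ T → r j (j + 1))
    (hcard : #D + #T + #B < k) (hB : #B + 1 < k) : ∃ i ∉ B, ∃ j ∉ B, i ≠ j ∧ r i j := by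
  classical
  set C : Finset (Fin k) := D ∪ T.image (· - 1)
  have hC : ∀ j ∉ C, j ∉ D ∧ j + 1 ∉ T := fun j hj => by
    simp only [C, mem_union, mem_image, not_or, not_exists, not_and] at hj
    exact ⟨hj.1, fun h => hj.2 _ h (add_sub_cancel_right j 1)⟩
  obtain ⟨C', hCC', ⟨c, hc⟩, hC'⟩ : ∃ C' : Finset (Fin k), C ⊆ C' ∧ C'.Nonempty ∧ #C' < #Bᶜ := by
    have : #C ≤ #D + #T := (card_union_le _ _).trans (add_le_add_right card_image_le _)
    rw [card_compl, Fintype.card_fin]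
    rcases C.eq_empty_or_nonempty with h | h
    · exact ⟨{0}, by simp [h], singleton_nonempty _, by simp; omega⟩
    · exact ⟨C, subset_rfl, h, by omega⟩
  have hex : ∀ u : Fin k, ∃ s : ℕ, u + s ∈ C' := fun u => ⟨(c - u).val, by simpa using hc⟩
  have hland : ∀ u ∉ B, r u (u + Nat.find (hex u)) := fun u hu =>
    (Fin.rel_add_natCast htrans hstep (fun h => hu (hTB h)) (hrefl u hu) _
      fun _ ht => hC _ fun h => Nat.find_min (hex u) ht (hCC' h)).1
  obtain ⟨u, hu, u', hu', hne, heq⟩ := exists_ne_map_eq_of_card_lt_of_maps_to hC'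
    (f := fun u => u + Nat.find (hex u)) fun u _ => Nat.find_spec (hex u)
  rw [mem_compl] at hu hu'
  exact ⟨u, hu, u', hu', hne, htrans _ _ _ (hland u hu) (heq ▸ hsymm _ _ (hland u' hu'))⟩

end Cycle

section Wheel

variable {k : ℕ}

lemma wheel_adj_last_castSucc (i : Fin k) : (wheel k).Adj (Fin.last k) i.castSucc := by
  simp [wheel, (Fin.castSucc_ne_last i).symm]

variable [NeZero k]

lemma Fin.val_add_one_eq_mod (hk : 1 < k) (i : Fin k) : (i + 1).val = (i.val + 1) % k := by
  rw [Fin.val_add, Fin.val_one', Nat.mod_eq_of_lt hk]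

lemma Fin.ne_add_one (hk : 1 < k) (i : Fin k) : i ≠ i + 1 := by
  rw [Ne, left_eq_add, Fin.ext_iff, Fin.val_one', Nat.mod_eq_of_lt hk]
  simp

lemma Fin.add_one_add_one_ne (hk : 2 < k) (i : Fin k) : i + 1 + 1 ≠ i := by
  rw [add_assoc, Ne, add_eq_left, Fin.ext_iff, Fin.val_add, Fin.val_one',
    Nat.mod_eq_of_lt (by omega : 1 < k)]
  simp [Nat.mod_eq_of_lt hk]

lemma wheel_adj_castSucc_castSucc (hk : 1 < k) {i j : Fin k} :
    (wheel k).Adj i.castSucc j.castSucc ↔ i ≠ j ∧ (j = i + 1 ∨ i = j + 1) := by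
  simp only [wheel, fromRel_adj, ne_eq, Fin.castSucc_inj, Fin.ext_iff (a := j),
    Fin.ext_iff (a := i), Fin.val_add_one_eq_mod hk, Fin.val_castSucc]
  have := i.isLt
  have := j.isLt
  grind

lemma wheel_adj_rim (hk : 1 < k) (j : Fin k) : (wheel k).Adj j.castSucc (j + 1).castSucc :=
  (wheel_adj_castSucc_castSucc hk).2 ⟨Fin.ne_add_one hk j, .inl rfl⟩

lemma ncard_wheel_neighborSet_castSucc_le (hk : 1 < k) (i : Fin k) :
    ((wheel k).neighborSet i.castSucc).ncard ≤ 3 := by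
  have hsub : (wheel k).neighborSet i.castSucc ⊆
      {Fin.last k, (i + 1).castSucc, (i - 1).castSucc} := by
    intro b hb
    induction b using Fin.lastCases with
    | last => exact .inl rfl
    | cast j =>
      rcases ((wheel_adj_castSucc_castSucc hk).1 hb).2 with rfl | h
      · exact .inr (.inl rfl)
      · exact .inr (.inr (by rw [eq_sub_of_add_eq h.symm]; rfl))
  refine (Set.ncard_le_ncard hsub (Set.toFinite _)).trans ?_
  grw [Set.ncard_insert_le, Set.ncard_insert_le, Set.ncard_singleton]

end Wheel

/-- The path system of `IsSubdivisionWith F H f`, without the covering of vertices. The paths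
`walk a b h` and `walk b a h.symm` need not be reverses of each other, so both orientations
count towards degrees. -/
structure BranchPaths {α V : Type*} (F : SimpleGraph α) (H : SimpleGraph V) (f : α → V) where
  walk : ∀ a b, F.Adj a b → H.Walk (f a) (f b)
  isPath : ∀ a b h, (walk a b h).IsPath
  eq_of_mem_range : ∀ a b h, ∀ c ∈ (walk a b h).support, c ∈ Set.range f → c = f a ∨ c = f b
  eq_of_mem_inter : ∀ a b h a' b' h', s(a, b) ≠ s(a', b') →
    ∀ c ∈ (walk a b h).support, c ∈ (walk a' b' h').support →
      (c = f a ∨ c = f b) ∧ (c = f a' ∨ c = f b')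
  exists_adj : ∀ x y, H.Adj x y → ∃ a b h, (walk a b h).toSubgraph.Adj x y

namespace BranchPaths

section General

variable {α V : Type*} {F : SimpleGraph α} {H : SimpleGraph V} {f : α → V}

lemma _root_.IsSubdivisionWith.nonempty_branchPaths (h : IsSubdivisionWith F H f) :
    Nonempty (BranchPaths F H f) := by
  obtain ⟨-, P, hpath, hint, hdisj, -, hedge⟩ := h
  refine ⟨⟨P, hpath, fun a b h c hc hcf => ?_, hdisj, fun x y hxy => ?_⟩⟩
  · by_contra! hne
    exact hint a b h c hc hne.1 hne.2 hcf
  · obtain ⟨a, b, h, he⟩ := hedge s(x, y) hxy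
    exact ⟨a, b, h, Walk.adj_toSubgraph_iff_mem_edges.2 he⟩

lemma ncard_neighborSet_le_four (P : BranchPaths F H f) {x : V} (hx : x ∉ Set.range f) :
    (H.neighborSet x).ncard ≤ 4 := by
  rcases (H.neighborSet x).eq_empty_or_nonempty with h | ⟨y₀, hy₀⟩
  · simp [h]
  obtain ⟨a₀, b₀, h₀, hadj₀⟩ := P.exists_adj x y₀ hy₀
  have hsub : H.neighborSet x ⊆ (P.walk a₀ b₀ h₀).toSubgraph.neighborSet x ∪
      (P.walk b₀ a₀ h₀.symm).toSubgraph.neighborSet x := by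
    intro y hy
    obtain ⟨a, b, h, hadj⟩ := P.exists_adj x y hy
    have : s(a, b) = s(a₀, b₀) := by
      by_contra hne
      obtain ⟨hab, -⟩ := P.eq_of_mem_inter a b h a₀ b₀ h₀ hne x
        (Walk.mem_support_of_adj_toSubgraph hadj) (Walk.mem_support_of_adj_toSubgraph hadj₀)
      exact hx (hab.elim (fun e => ⟨a, e.symm⟩) fun e => ⟨b, e.symm⟩)
    rcases Sym2.eq_iff.1 this with ⟨rfl, rfl⟩ | ⟨rfl, rfl⟩
    exacts [.inl hadj, .inr hadj]
  calc _ ≤ _ := Set.ncard_le_ncard hsub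
        ((Walk.finite_neighborSet_toSubgraph _).union (Walk.finite_neighborSet_toSubgraph _))
    _ ≤ _ := Set.ncard_union_le _ _
    _ ≤ 2 + 2 := add_le_add ((P.isPath _ _ _).ncard_neighborSet_toSubgraph_le_two x)
        ((P.isPath _ _ _).ncard_neighborSet_toSubgraph_le_two x)

lemma ncard_neighborSet_apply_le [Finite α] (P : BranchPaths F H f) (hf : f.Injective)
    (a : α) : (H.neighborSet (f a)).ncard ≤ 2 * (F.neighborSet a).ncard := by
  classical
  set out : α → Set V := fun b => {y | ∃ h, (P.walk a b h).toSubgraph.Adj (f a) y}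
  set inc : α → Set V := fun b => {y | ∃ h, (P.walk b a h).toSubgraph.Adj (f a) y}
  have hout : ∀ b, (out b).Subsingleton := fun b _ ⟨h, hy⟩ _ ⟨_, hy'⟩ =>
    (P.isPath a b h).subsingleton_neighborSet_toSubgraph_start hy hy'
  have hinc : ∀ b, (inc b).Subsingleton := fun b _ ⟨h, hy⟩ _ ⟨_, hy'⟩ =>
    (P.isPath b a h).subsingleton_neighborSet_toSubgraph_end hy hy'
  set t := (F.neighborSet a).toFinite.toFinset
  have hsub : H.neighborSet (f a) ⊆ ⋃ b ∈ t, (out b ∪ inc b) := by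
    intro y hy
    obtain ⟨a', b', h, hadj⟩ := P.exists_adj _ y hy
    rcases P.eq_of_mem_range a' b' h _ (Walk.mem_support_of_adj_toSubgraph hadj) ⟨a, rfl⟩
      with ha | ha <;> obtain rfl := hf ha
    · exact Set.mem_biUnion (by simpa [t] using h) (.inl ⟨h, hadj⟩)
    · exact Set.mem_biUnion (by simpa [t] using h.symm) (.inr ⟨h, hadj⟩)
  calc _ ≤ _ := Set.ncard_le_ncard hsub
        (t.finite_toSet.biUnion fun b _ => (hout b).finite.union (hinc b).finite)
    _ ≤ ∑ b ∈ t, (out b ∪ inc b).ncard := t.set_ncard_biUnion_le _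
    _ ≤ ∑ _b ∈ t, 2 := Finset.sum_le_sum fun b _ => (Set.ncard_union_le _ _).trans
        (add_le_add (hout b).ncard_le_one (hinc b).ncard_le_one)
    _ = 2 * (F.neighborSet a).ncard := by
        rw [Finset.sum_const, smul_eq_mul, mul_comm, Set.ncard_eq_toFinset_card _]

end General

variable {V : Type*} {H : SimpleGraph V} {k : ℕ} {f : Fin (k + 1) → V}

lemma eq_last_of_six_lt_ncard (P : BranchPaths (wheel k) H f) (hf : f.Injective) (hk : 1 < k)
    {x : V} (hx : 6 < (H.neighborSet x).ncard) : x = f (Fin.last k) := by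
  have : NeZero k := ⟨by omega⟩
  by_contra hne
  by_cases hr : x ∈ Set.range f
  · obtain ⟨a, rfl⟩ := hr
    obtain ⟨i, rfl⟩ := Fin.exists_castSucc_eq.2 fun h => hne (h ▸ rfl)
    grw [P.ncard_neighborSet_apply_le hf, ncard_wheel_neighborSet_castSucc_le hk] at hx
    omega
  · grw [P.ncard_neighborSet_le_four hr] at hx
    omega

def spoke (P : BranchPaths (wheel k) H f) (m : Fin k) : H.Walk (f (Fin.last k)) (f m.castSucc) :=
  P.walk _ _ (wheel_adj_last_castSucc m)

def rim [NeZero k] (P : BranchPaths (wheel k) H f) (hk : 1 < k) (j : Fin k) :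
    H.Walk (f j.castSucc) (f (j + 1).castSucc) :=
  P.walk _ _ (wheel_adj_rim hk j)

lemma eq_last_of_mem_spoke_of_mem_spoke (P : BranchPaths (wheel k) H f) (hf : f.Injective)
    {i j : Fin k} (hij : i ≠ j) {x : V} (hi : x ∈ (P.spoke i).support)
    (hj : x ∈ (P.spoke j).support) : x = f (Fin.last k) := by
  have hne : s(Fin.last k, i.castSucc) ≠ s(Fin.last k, j.castSucc) := by simp [hij]
  obtain ⟨hxi | hxi, hxj | hxj⟩ := P.eq_of_mem_inter _ _ _ _ _ _ hne x hi hj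
  any_goals assumption
  exact absurd (Fin.castSucc_injective k (hf (hxi.symm.trans hxj))) hij

open Classical in
noncomputable def blockedSpokes (P : BranchPaths (wheel k) H f) (X : Set V) : Finset (Fin k) :=
  {m | ∃ x ∈ X, x ∈ (P.spoke m).support}

lemma mem_blockedSpokes {P : BranchPaths (wheel k) H f} {X : Set V} {m : Fin k} :
    m ∈ P.blockedSpokes X ↔ ∃ x ∈ X, x ∈ (P.spoke m).support := by
  simp [blockedSpokes]

lemma exists_adj_reachableAvoiding (P : BranchPaths (wheel k) H f) (hf : f.Injective)
    {S : Set V} {m : Fin k} (hm : m ∉ P.blockedSpokes (S \ {f (Fin.last k)})) :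
    ∃ y ∈ (P.spoke m).support, H.Adj (f (Fin.last k)) y ∧
      ReachableAvoiding H S y (f m.castSucc) :=
  (P.isPath _ _ _).exists_adj_reachableAvoiding (hf.ne (Fin.castSucc_ne_last m).symm)
    fun z hz hzS => by_contra fun hne => hm (mem_blockedSpokes.2 ⟨z, ⟨hzS, hne⟩, hz⟩)

lemma not_reachableAvoiding_of_notMem_blockedSpokes [Finite V] (P : BranchPaths (wheel k) H f)
    (hf : f.Injective) {G : SimpleGraph V} (hHG : H ≤ G) {S : Set V}
    (hbridge : ∀ U, IsBridgeOf G S U → (G.neighborSet (f (Fin.last k)) ∩ (U \ S)).ncard ≤ 1)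
    {i j : Fin k} (hi : i ∉ P.blockedSpokes (S \ {f (Fin.last k)}))
    (hj : j ∉ P.blockedSpokes (S \ {f (Fin.last k)})) (hij : i ≠ j) :
    ¬ ReachableAvoiding G S (f i.castSucc) (f j.castSucc) := by
  intro hr
  obtain ⟨x, hxi, hx, hxr⟩ := P.exists_adj_reachableAvoiding hf hi
  obtain ⟨y, hyj, hy, hyr⟩ := P.exists_adj_reachableAvoiding hf hj
  have hxy : x ≠ y := fun h => hx.ne' (P.eq_last_of_mem_spoke_of_mem_spoke hf hij hxi (h ▸ hyj))
  exact not_reachableAvoiding_of_forall_isBridgeOf hbridge (hHG hx) (hHG hy) hxy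
    (((hxr.mono hHG).trans hr).trans (hyr.mono hHG).symm)

variable [NeZero k]

lemma eq_of_mem_spoke_of_mem_rim (P : BranchPaths (wheel k) H f) (hk : 1 < k) {m j : Fin k}
    {x : V} (hm : x ∈ (P.spoke m).support) (hj : x ∈ (P.rim hk j).support) :
    x = f j.castSucc ∨ x = f (j + 1).castSucc := by
  refine (P.eq_of_mem_inter _ _ _ _ _ _ ?_ x hm hj).2
  simp [(Fin.castSucc_ne_last _).symm]

lemma eq_of_mem_rim_of_mem_rim (P : BranchPaths (wheel k) H f) (hk : 2 < k) {j j' : Fin k}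
    (hjj' : j ≠ j') {x : V} (h : x ∈ (P.rim (Nat.lt_of_succ_lt hk) j).support)
    (h' : x ∈ (P.rim (Nat.lt_of_succ_lt hk) j').support) :
    x = f j.castSucc ∨ x = f (j + 1).castSucc := by
  refine (P.eq_of_mem_inter _ _ _ _ _ _ ?_ x h h').1
  intro he
  rcases Sym2.eq_iff.1 he with ⟨h₁, -⟩ | ⟨h₁, h₂⟩
  · exact hjj' (Fin.castSucc_injective k h₁)
  · rw [Fin.castSucc_injective k h₁] at h₂
    exact Fin.add_one_add_one_ne hk j' (Fin.castSucc_injective k h₂)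

lemma last_notMem_rim (P : BranchPaths (wheel k) H f) (hf : f.Injective) (hk : 1 < k)
    (j : Fin k) : f (Fin.last k) ∉ (P.rim hk j).support := fun h =>
  (P.eq_of_mem_range _ _ _ _ h ⟨_, rfl⟩).elim (fun e => Fin.castSucc_ne_last _ (hf e).symm)
    fun e => Fin.castSucc_ne_last _ (hf e).symm

open Classical in
noncomputable def cutRims (P : BranchPaths (wheel k) H f) (hk : 1 < k) (X : Set V) :
    Finset (Fin k) :=
  {j | ∃ x ∈ X, x ∈ (P.rim hk j).support ∧ ∀ m, x ∉ (P.spoke m).support}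

lemma mem_cutRims {P : BranchPaths (wheel k) H f} {hk : 1 < k} {X : Set V} {j : Fin k} :
    j ∈ P.cutRims hk X ↔ ∃ x ∈ X, x ∈ (P.rim hk j).support ∧ ∀ m, x ∉ (P.spoke m).support := by
  simp [cutRims]

lemma card_blockedSpokes_add_card_cutRims_le (P : BranchPaths (wheel k) H f)
    (hf : f.Injective) (hk : 2 < k) {X : Set V} (hX : X.Finite) (hlast : f (Fin.last k) ∉ X) :
    #(P.blockedSpokes X) + #(P.cutRims (Nat.lt_of_succ_lt hk) X) ≤ X.ncard := by
  classical
  set onSpoke : V → Prop := fun x => ∃ m, x ∈ (P.spoke m).support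
  have hB : #(P.blockedSpokes X) ≤ #{x ∈ hX.toFinset | onSpoke x} := by
    refine card_le_card_of_forall_subsingleton (fun m x => x ∈ (P.spoke m).support)
      (fun m hm => ?_) fun x hx i ⟨_, hi⟩ j ⟨_, hj⟩ => ?_
    · obtain ⟨x, hxX, hx⟩ := mem_blockedSpokes.1 hm
      exact ⟨x, by simpa [onSpoke, hxX] using ⟨m, hx⟩, hx⟩
    · by_contra hij
      rw [mem_filter, Set.Finite.mem_toFinset] at hx
      exact hlast (P.eq_last_of_mem_spoke_of_mem_spoke hf hij hi hj ▸ hx.1)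
  have hD : #(P.cutRims (Nat.lt_of_succ_lt hk) X) ≤ #{x ∈ hX.toFinset | ¬ onSpoke x} := by
    refine card_le_card_of_forall_subsingleton
      (fun j x => x ∈ (P.rim (Nat.lt_of_succ_lt hk) j).support)
      (fun j hj => ?_) fun x hx i ⟨_, hi⟩ j ⟨_, hj⟩ => ?_
    · obtain ⟨x, hxX, hx, hoff⟩ := mem_cutRims.1 hj
      exact ⟨x, by simpa [onSpoke, hxX] using hoff, hx⟩
    · by_contra hij
      rw [mem_filter] at hx
      rcases P.eq_of_mem_rim_of_mem_rim hk hij hi hj with rfl | rfl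
      exacts [hx.2 ⟨i, (P.spoke i).end_mem_support⟩, hx.2 ⟨i + 1, (P.spoke _).end_mem_support⟩]
  rw [Set.ncard_eq_toFinset_card X hX, ← card_filter_add_card_filter_not onSpoke]
  exact add_le_add hB hD

lemma reachableAvoiding_rim (P : BranchPaths (wheel k) H f) (hf : f.Injective) (hk : 1 < k)
    {S : Set V} {j : Fin k} (hj : j ∉ P.cutRims hk (S \ {f (Fin.last k)}))
    (h₀ : f j.castSucc ∉ S) (h₁ : f (j + 1).castSucc ∉ S) :
    ReachableAvoiding H S (f j.castSucc) (f (j + 1).castSucc) := by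
  refine ⟨P.rim hk j, fun z hz hzS => ?_⟩
  have hzl : z ≠ f (Fin.last k) := fun h => P.last_notMem_rim hf hk j (h ▸ hz)
  obtain ⟨m, hm⟩ : ∃ m, z ∈ (P.spoke m).support := by
    by_contra! hoff
    exact hj (mem_cutRims.2 ⟨z, ⟨hzS, hzl⟩, hz, hoff⟩)
  rcases P.eq_of_mem_spoke_of_mem_rim hk hm hz with rfl | rfl
  exacts [h₀ hzS, h₁ hzS]

end BranchPaths

theorem stmt4_general {V : Type u} [Fintype V] (G : SimpleGraph V) (k : ℕ) (hk : 7 ≤ k)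
    (S : Set V) (v0 : V)
    (hS : S.ncard = 4) (hv0 : v0 ∈ S)
    (hnbr : ∀ U : Set V, IsBridgeOf G S U → ((G.neighborSet v0) ∩ (U \ S)).ncard ≤ 1) :
    ¬ ContainsWheelCenteredOn G k v0 := by
  classical
  rintro ⟨H, hHG, ⟨f, hsub⟩, hdeg⟩
  have : NeZero k := ⟨by omega⟩
  obtain ⟨P⟩ := hsub.nonempty_branchPaths
  have hf : f.Injective := hsub.1
  obtain rfl : v0 = f (Fin.last k) :=
    P.eq_last_of_six_lt_ncard hf (by omega) (by rw [← degN, hdeg]; omega)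
  set X := S \ {f (Fin.last k)}
  have hX : X.ncard = 3 := by rw [Set.ncard_sdiff_singleton_of_mem hv0, hS]
  have hBD := hX ▸ P.card_blockedSpokes_add_card_cutRims_le hf (by omega) X.toFinite (by simp [X])
  set T : Finset (Fin k) := {m | f m.castSucc ∈ S}
  have hTB : T ⊆ P.blockedSpokes X := fun m hm => BranchPaths.mem_blockedSpokes.2
    ⟨_, ⟨(mem_filter.1 hm).2, hf.ne (Fin.castSucc_ne_last m)⟩, (P.spoke m).end_mem_support⟩
  obtain ⟨i, hi, j, hj, hij, hr⟩ := Fin.exists_ne_rel_of_card_lt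
    (r := fun i j => ReachableAvoiding G S (f i.castSucc) (f j.castSucc)) (D := P.cutRims _ X)
    (fun _ _ => .symm) (fun _ _ _ => .trans) hTB
    (fun i hi => .refl fun h => hi (hTB (by simpa [T] using h)))
    (fun j hjD hj₀ hj₁ => (P.reachableAvoiding_rim hf (by omega) hjD (by simpa [T] using hj₀)
      (by simpa [T] using hj₁)).mono hHG)
    (by grw [card_le_card hTB]; omega) (by omega)
  exact P.not_reachableAvoiding_of_notMem_blockedSpokes hf hHG hnbr hi hj hij hr

/-- If every bridge of `G|S` (with `|S| = 4`, `v0 ∈ S`) contains at most one neighbour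
of `v0` outside `S`, then `G` has no `W_k`-subdivision (`k ≥ 7`) centred on `v0`. -/
theorem stmt4 {V : Type u} [Fintype V] (G : SimpleGraph V) (k : ℕ) (hk : 7 ≤ k)
    (S : Set V) (v0 : V)
    (hsep : IsSeparating G S) (hS : S.ncard = 4) (hv0 : v0 ∈ S)
    (hnbr : ∀ U : Set V, IsBridgeOf G S U → ((G.neighborSet v0) ∩ (U \ S)).ncard ≤ 1) :
    ¬ ContainsWheelCenteredOn G k v0 :=
  stmt4_general G k hk S v0 hS hv0 hnbr
end
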